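/- Let L be a complete lattice, let E : x =_η f(x) be a system of m fixpoint equations over L with solution s ∈ L^m, and let u be a compatible tuple of up-to functions for E. Let s' be the solution of the system Eu : x =_η f(Πu(x)) and let s̄ be the solution of the system Eū : x =_η f(Πū(x)), where ū = (ū_1,…,ū_m). Then s' ⊑ s̄ = s; if moreover each u_i is extensive, then s' = s. -/

import Mathlib

/-- Least fixpoint of `f` (Knaster–Tarski construction). -/
def muFix {L : Type*} [CompleteLattice L] (f : L → L) : L := sInf {x | f x ≤ x}

/-- Greatest fixpoint of `f` (Knaster–Tarski construction). -/
def nuFix {L : Type*} [CompleteLattice L] (f : L → L) : L := sSup {x | x ≤ f x}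
/-- `g` is (directed-)continuous: it preserves joins of (nonempty) directed sets. -/
def DirContinuous {L M : Type*} [CompleteLattice L] [CompleteLattice M] (g : L → M) : Prop :=
  ∀ S : Set L, S.Nonempty → DirectedOn (· ≤ ·) S → g (sSup S) = sSup (g '' S)

/-- `g` is strict: it maps bottom to bottom. -/
def BotStrict {L M : Type*} [CompleteLattice L] [CompleteLattice M] (g : L → M) : Prop :=
  g ⊥ = ⊥

/-- `g` is co-continuous: it preserves meets of (nonempty) codirected sets. -/
def CodirContinuous {L M : Type*} [CompleteLattice L] [CompleteLattice M] (g : L → M) : Prop :=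
  ∀ S : Set L, S.Nonempty → DirectedOn (· ≥ ·) S → g (sInf S) = sInf (g '' S)

/-- `g` is co-strict: it maps top to top. -/
def TopStrict {L M : Type*} [CompleteLattice L] [CompleteLattice M] (g : L → M) : Prop :=
  g ⊤ = ⊤
/-- Marker of a fixpoint equation: least (`mu`) or greatest (`nu`) fixpoint. -/
inductive EqMarker : Type
  | mu
  | nu

/-- Solution of a system of `m` fixpoint equations `x =_η f(x)` over a complete
lattice `L`, defined by recursion on `m`: the last variable is treated as a
parameter, the first `m-1` equations are solved recursively, the resulting
one-variable equation is solved by taking the least or greatest fixpoint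
according to the marker of the last equation, and the value is substituted
back. -/
def eqSol {L : Type*} [CompleteLattice L] :
    (m : ℕ) → ((Fin m → L) → Fin m → L) → (Fin m → EqMarker) → (Fin m → L)
  | 0, _, _ => fun i => i.elim0
  | m + 1, f, η =>
    let solPrev : L → Fin m → L := fun x =>
      eqSol m (fun v j => f (Fin.snoc v x) j.castSucc) (fun j => η j.castSucc)
    let g : L → L := fun x => f (Fin.snoc (solPrev x) x) (Fin.last m)
    let slast : L :=
      match η (Fin.last m) with
      | EqMarker.mu => muFix g
      | EqMarker.nu => nuFix g
    Fin.snoc (solPrev slast) slast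
/-- The least closure above `u`: `ū(x)` is the least fixpoint of `y ↦ u(y) ⊔ x`. -/
def ubar {L : Type*} [CompleteLattice L] (u : L → L) : L → L :=
  fun x => muFix (fun y => u y ⊔ x)


section Basic
variable {L : Type*} [CompleteLattice L]

theorem muFix_le {f : L → L} {x : L} (h : f x ≤ x) : muFix f ≤ x := sInf_le h

theorem map_muFix_le {f : L → L} (hf : Monotone f) : f (muFix f) ≤ muFix f :=
  le_sInf fun x hx => le_trans (hf (sInf_le hx)) hx

theorem muFix_fixed {f : L → L} (hf : Monotone f) : f (muFix f) = muFix f :=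
  le_antisymm (map_muFix_le hf) (muFix_le (hf (map_muFix_le hf)))

theorem le_nuFix {f : L → L} {x : L} (h : x ≤ f x) : x ≤ nuFix f := le_sSup h

theorem nuFix_le_map {f : L → L} (hf : Monotone f) : nuFix f ≤ f (nuFix f) :=
  sSup_le fun x hx => le_trans hx (hf (le_sSup hx))

theorem nuFix_fixed {f : L → L} (hf : Monotone f) : f (nuFix f) = nuFix f :=
  le_antisymm (le_nuFix (hf (nuFix_le_map hf))) (nuFix_le_map hf)

open OrdinalApprox in
/-- Induction principle for `muFix`: a predicate holding at `⊥`, preserved by `f`,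
and closed under directed suprema holds at the least fixpoint. -/
theorem muFix_induction {f : L → L} (hf : Monotone f) (P : L → Prop)
    (hbot : P ⊥) (hstep : ∀ x, P x → P (f x))
    (hsup : ∀ S : Set L, S.Nonempty → DirectedOn (· ≤ ·) S → (∀ x ∈ S, P x) → P (sSup S)) :
    P (muFix f) := by
  have hmu : muFix f = OrderHom.lfp ⟨f, hf⟩ := rfl
  rw [hmu, ← lfpApprox_ord_eq_lfp]
  have key : ∀ a : Ordinal, P (lfpApprox ⟨f, hf⟩ ⊥ a) := by
    intro a
    induction a using Ordinal.induction with
    | h a IH =>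
      rw [lfpApprox]
      have heq : (⊥ ⊔ ⨆ b, ⨆ (_ : b < a), (⟨f, hf⟩ : L →o L) (lfpApprox ⟨f, hf⟩ ⊥ b)) =
          sSup ({y | ∃ b, ∃ (_ : b < a), (⟨f, hf⟩ : L →o L) (lfpApprox ⟨f, hf⟩ ⊥ b) = y} ∪ {⊥}) := by
        apply le_antisymm
        · exact sup_le (le_sSup (Or.inr rfl)) (iSup₂_le fun b hb => le_sSup (Or.inl ⟨b, hb, rfl⟩))
        · refine sSup_le ?_
          rintro y (⟨b, hb, rfl⟩ | hy)
          · exact le_sup_of_le_right (le_iSup₂_of_le b hb le_rfl)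
          · rw [Set.mem_singleton_iff] at hy; rw [hy]; exact le_sup_left
      rw [heq]
      apply hsup
      · exact ⟨⊥, Or.inr rfl⟩
      · rintro x (hx | hx) y (hy | hy)
        · obtain ⟨b, hb, rfl⟩ := hx
          obtain ⟨c, hc, rfl⟩ := hy
          rcases le_total b c with h | h
          · exact ⟨_, Or.inl ⟨c, hc, rfl⟩,
              (⟨f, hf⟩ : L →o L).monotone (lfpApprox_monotone ⟨f, hf⟩ h), le_rfl⟩
          · exact ⟨_, Or.inl ⟨b, hb, rfl⟩, le_rfl,
              (⟨f, hf⟩ : L →o L).monotone (lfpApprox_monotone ⟨f, hf⟩ h)⟩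
        · rw [Set.mem_singleton_iff] at hy
          exact ⟨x, Or.inl hx, le_rfl, hy ▸ bot_le⟩
        · rw [Set.mem_singleton_iff] at hx
          exact ⟨y, Or.inl hy, hx ▸ bot_le, le_rfl⟩
        · rw [Set.mem_singleton_iff] at hx hy
          exact ⟨x, Or.inr hx, le_rfl, by rw [hx, hy]⟩
      · rintro x (hx | hx)
        · obtain ⟨b, hb, rfl⟩ := hx
          exact hstep _ (IH b hb)
        · rw [Set.mem_singleton_iff] at hx; rw [hx]; exact hbot
  exact key _
end Basic

section Snoc
variable {L : Type*} [CompleteLattice L] {m : ℕ}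

theorem snoc_le_snoc {v w : Fin m → L} {x y : L} (hv : ∀ j, v j ≤ w j) (hx : x ≤ y) :
    ∀ i, (Fin.snoc v x : Fin (m+1) → L) i ≤ (Fin.snoc w y : Fin (m+1) → L) i := by
  intro i
  induction i using Fin.lastCases with
  | last => simpa using hx
  | cast j => simpa using hv j

theorem pi_map_snoc (u : Fin (m+1) → L → L) (v : Fin m → L) (x : L) :
    (fun i => u i ((Fin.snoc v x : Fin (m+1) → L) i)) =
      Fin.snoc (fun j : Fin m => u j.castSucc (v j)) (u (Fin.last m) x) := by
  funext i
  induction i using Fin.lastCases with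
  | last => simp
  | cast j => simp
end Snoc

section Ubar
variable {L : Type*} [CompleteLattice L] {u : L → L} (hu : Monotone u)
include hu

theorem ubar_fixed (x : L) : u (ubar u x) ⊔ x = ubar u x :=
  muFix_fixed (fun _ _ h => sup_le_sup_right (hu h) x)

theorem le_ubar (x : L) : x ≤ ubar u x := le_sup_right.trans (ubar_fixed hu x).le

theorem map_ubar_le (x : L) : u (ubar u x) ≤ ubar u x :=
  le_sup_left.trans (ubar_fixed hu x).le

theorem map_le_ubar (x : L) : u x ≤ ubar u x :=
  (hu (le_ubar hu x)).trans (map_ubar_le hu x)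

theorem ubar_mono : Monotone (ubar u) := by
  intro x y hxy
  exact muFix_le (sup_le (map_ubar_le hu y) (hxy.trans (le_ubar hu y)))

theorem ubar_idem_le (x : L) : ubar u (ubar u x) ≤ ubar u x :=
  muFix_le (sup_le (map_ubar_le hu x) le_rfl)

theorem ubar_strict (hs : BotStrict u) : BotStrict (ubar u) :=
  le_bot_iff.mp (muFix_le (by rw [hs]; simp))

theorem ubar_cont (hc : DirContinuous u) : DirContinuous (ubar u) := by
  intro S hS hdir
  apply le_antisymm
  · apply muFix_le
    apply sup_le
    · have himg : (ubar u '' S).Nonempty := hS.image _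
      have hdir' : DirectedOn (· ≤ ·) (ubar u '' S) := by
        rintro _ ⟨a, ha, rfl⟩ _ ⟨b, hb, rfl⟩
        obtain ⟨c, hc, hac, hbc⟩ := hdir a ha b hb
        exact ⟨_, ⟨c, hc, rfl⟩, ubar_mono hu hac, ubar_mono hu hbc⟩
      rw [hc _ himg hdir']
      apply sSup_le
      rintro y ⟨z, ⟨w, hw, rfl⟩, rfl⟩
      exact (map_ubar_le hu w).trans (le_sSup ⟨w, hw, rfl⟩)
    · exact sSup_le fun x hx => (le_ubar hu x).trans (le_sSup ⟨x, hx, rfl⟩)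
  · exact sSup_le (by rintro y ⟨x, hx, rfl⟩; exact ubar_mono hu (le_sSup hx))
end Ubar

section Sys
variable {L : Type*} [CompleteLattice L]

def prevF (m : ℕ) (f : (Fin (m+1) → L) → Fin (m+1) → L) (x : L) :
    (Fin m → L) → Fin m → L := fun v j => f (Fin.snoc v x) j.castSucc

def prevEta (m : ℕ) (η : Fin (m+1) → EqMarker) : Fin m → EqMarker := fun j => η j.castSucc

def lastG (m : ℕ) (f : (Fin (m+1) → L) → Fin (m+1) → L) (η : Fin (m+1) → EqMarker) (x : L) : L :=
  f (Fin.snoc (eqSol m (prevF m f x) (prevEta m η)) x) (Fin.last m)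

def lastS (m : ℕ) (f : (Fin (m+1) → L) → Fin (m+1) → L) (η : Fin (m+1) → EqMarker) : L :=
  match η (Fin.last m) with
  | EqMarker.mu => muFix (lastG m f η)
  | EqMarker.nu => nuFix (lastG m f η)

theorem eqSol_succ (m : ℕ) (f : (Fin (m+1) → L) → Fin (m+1) → L) (η : Fin (m+1) → EqMarker) :
    eqSol (m+1) f η =
      Fin.snoc (eqSol m (prevF m f (lastS m f η)) (prevEta m η)) (lastS m f η) := rfl

theorem prevF_mono {m : ℕ} {f : (Fin (m+1) → L) → Fin (m+1) → L} (hf : Monotone f) (x : L) :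
    Monotone (prevF m f x) :=
  fun v w hvw j => hf (fun i => snoc_le_snoc (fun k => hvw k) le_rfl i) j.castSucc

/-- Master monotone-comparison lemma: `eqSol` is monotone in the system. -/
theorem eqSol_le_eqSol :
    ∀ (m : ℕ) (f₁ f₂ : (Fin m → L) → Fin m → L), Monotone f₁ → Monotone f₂ →
      (∀ v i, f₁ v i ≤ f₂ v i) → ∀ (η : Fin m → EqMarker) i,
      eqSol m f₁ η i ≤ eqSol m f₂ η i := by
  intro m
  induction m with
  | zero => intro _ _ _ _ _ _ i; exact i.elim0
  | succ m IH =>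
    intro f₁ f₂ hf₁ hf₂ hle η
    -- comparison of the truncated solutions for ordered parameters
    have hsp : ∀ (g₁ g₂ : (Fin (m+1) → L) → Fin (m+1) → L), Monotone g₁ → Monotone g₂ →
        (∀ v i, g₁ v i ≤ g₂ v i) → ∀ x₁ x₂, x₁ ≤ x₂ → ∀ j,
        eqSol m (prevF m g₁ x₁) (prevEta m η) j ≤ eqSol m (prevF m g₂ x₂) (prevEta m η) j := by
      intro g₁ g₂ hg₁ hg₂ hg x₁ x₂ hx j
      exact IH _ _ (prevF_mono hg₁ x₁) (prevF_mono hg₂ x₂)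
        (fun v i => le_trans (hg _ _) (hg₂ (fun k => snoc_le_snoc (fun _ => le_rfl) hx k) _))
        _ j
    have hG : ∀ (g₁ g₂ : (Fin (m+1) → L) → Fin (m+1) → L), Monotone g₁ → Monotone g₂ →
        (∀ v i, g₁ v i ≤ g₂ v i) → ∀ x₁ x₂, x₁ ≤ x₂ →
        lastG m g₁ η x₁ ≤ lastG m g₂ η x₂ := by
      intro g₁ g₂ hg₁ hg₂ hg x₁ x₂ hx
      refine le_trans (hg _ _) (hg₂ (fun k => snoc_le_snoc (fun j => ?_) hx k) _)
      exact hsp g₁ g₂ hg₁ hg₂ hg x₁ x₂ hx j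
    have hg₂mono : Monotone (lastG m f₂ η) :=
      fun x y hxy => hG f₂ f₂ hf₂ hf₂ (fun _ _ => le_rfl) x y hxy
    have hg₁mono : Monotone (lastG m f₁ η) :=
      fun x y hxy => hG f₁ f₁ hf₁ hf₁ (fun _ _ => le_rfl) x y hxy
    have hs : lastS m f₁ η ≤ lastS m f₂ η := by
      unfold lastS
      cases η (Fin.last m) with
      | mu =>
        exact muFix_le (le_trans (hG f₁ f₂ hf₁ hf₂ hle _ _ le_rfl) (map_muFix_le hg₂mono))
      | nu =>
        exact le_nuFix (le_trans (nuFix_le_map hg₁mono) (hG f₁ f₂ hf₁ hf₂ hle _ _ le_rfl))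
    intro i
    rw [eqSol_succ, eqSol_succ]
    induction i using Fin.lastCases with
    | last => simpa using hs
    | cast j => simpa using hsp f₁ f₂ hf₁ hf₂ hle _ _ hs j
end Sys

section Key
variable {L : Type*} [CompleteLattice L]

/-- Compatibility transfers to the truncated system when the parameter is a
post-fixpoint of the last up-to function. -/
theorem compat_prev {m : ℕ} {f : (Fin (m+1) → L) → Fin (m+1) → L} (hf : Monotone f)
    {u : Fin (m+1) → L → L}
    (hcompat : ∀ v i, u i (f v i) ≤ f (fun j => u j (v j)) i)
    {c : L} (hc : u (Fin.last m) c ≤ c) :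
    ∀ (v : Fin m → L) (j : Fin m), u j.castSucc (prevF m f c v j) ≤
      prevF m f c (fun k => u k.castSucc (v k)) j := by
  intro v j
  refine le_trans (hcompat (Fin.snoc v c) j.castSucc) ?_
  rw [pi_map_snoc u v c]
  exact hf (fun i => snoc_le_snoc (fun _ => le_rfl) hc i) j.castSucc

theorem monotone_lastG {m : ℕ} {f : (Fin (m+1) → L) → Fin (m+1) → L} (hf : Monotone f)
    (η : Fin (m+1) → EqMarker) : Monotone (lastG m f η) := by
  intro x y hxy
  refine hf (fun i => snoc_le_snoc (fun j => ?_) hxy i) (Fin.last m)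
  exact eqSol_le_eqSol m _ _ (prevF_mono hf x) (prevF_mono hf y)
    (fun v i => hf (fun k => snoc_le_snoc (fun _ => le_rfl) hxy k) i.castSucc) _ j

/-- Key lemma: a compatible tuple of up-to functions is pointwise below the
identity on the solution. -/
theorem compat_le_sol :
    ∀ (m : ℕ) (f : (Fin m → L) → Fin m → L), Monotone f → ∀ (η : Fin m → EqMarker)
      (u : Fin m → L → L), (∀ i, Monotone (u i)) →
      (∀ v i, u i (f v i) ≤ f (fun j => u j (v j)) i) →
      (∀ i, η i = EqMarker.mu → DirContinuous (u i) ∧ BotStrict (u i)) →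
      ∀ i, u i (eqSol m f η i) ≤ eqSol m f η i := by
  intro m
  induction m with
  | zero => intro _ _ _ _ _ _ _ i; exact i.elim0
  | succ m IH =>
    intro f hf η u hu hcompat hμ
    set ul := u (Fin.last m) with hul
    have hgmono : Monotone (lastG m f η) := monotone_lastG hf η
    -- the set of post-fixpoints of the last up-to function is closed under `lastG`
    have hg_closed : ∀ x, ul x ≤ x → ul (lastG m f η x) ≤ lastG m f η x := by
      intro x hx
      have hprev : ∀ j, u j.castSucc (eqSol m (prevF m f x) (prevEta m η) j) ≤
          eqSol m (prevF m f x) (prevEta m η) j :=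
        IH (prevF m f x) (prevF_mono hf x) (prevEta m η) (fun j => u j.castSucc)
          (fun j => hu j.castSucc) (compat_prev hf hcompat hx) (fun j hj => hμ j.castSucc hj)
      refine le_trans (hcompat (Fin.snoc (eqSol m (prevF m f x) (prevEta m η)) x) (Fin.last m)) ?_
      rw [pi_map_snoc u _ x]
      exact hf (fun i => snoc_le_snoc hprev hx i) (Fin.last m)
    -- the last component of the solution is a post-fixpoint of `ul`
    have hlast : ul (lastS m f η) ≤ lastS m f η := by
      unfold lastS
      rcases hη : η (Fin.last m) with _ | _
      · -- μ case : ordinal induction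
        obtain ⟨hcont, hstrict⟩ := hμ (Fin.last m) hη
        exact muFix_induction hgmono (fun x => ul x ≤ x) (le_of_eq hstrict) hg_closed
          (fun S hS hdir hP => by
            show ul (sSup S) ≤ sSup S
            rw [hul, hcont S hS hdir]
            exact sSup_le (by rintro _ ⟨x, hx, rfl⟩; exact (hP x hx).trans (le_sSup hx)))
      · -- ν case : via the closure ūl
        set t := ubar ul (nuFix (lastG m f η)) with ht
        have hnu_le_t : nuFix (lastG m f η) ≤ t := le_ubar (hu _) _
        have hut : ul t ≤ t := map_ubar_le (hu _) _
        have htg : t ≤ lastG m f η t := by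
          refine muFix_le (sup_le (hg_closed t hut) ?_)
          exact (nuFix_le_map hgmono).trans (hgmono hnu_le_t)
        have : t ≤ nuFix (lastG m f η) := le_nuFix htg
        exact le_trans (hu _ hnu_le_t) (hut.trans this)
    intro i
    rw [eqSol_succ]
    induction i using Fin.lastCases with
    | last => simpa using hlast
    | cast j =>
      simp only [Fin.snoc_castSucc]
      exact IH (prevF m f (lastS m f η)) (prevF_mono hf _) (prevEta m η)
        (fun k => u k.castSucc) (fun k => hu k.castSucc)
        (compat_prev hf hcompat hlast) (fun k hk => hμ k.castSucc hk) j
end Key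

section Closure
variable {L : Type*} [CompleteLattice L]

/-- Soundness for idempotent compatible tuples: the solution of the up-to
system is below the solution of the original system. -/
theorem sol_up_to_le_sol :
    ∀ (m : ℕ) (f : (Fin m → L) → Fin m → L), Monotone f → ∀ (η : Fin m → EqMarker)
      (u : Fin m → L → L), (∀ i, Monotone (u i)) →
      (∀ v i, u i (f v i) ≤ f (fun j => u j (v j)) i) →
      (∀ i, η i = EqMarker.mu → DirContinuous (u i) ∧ BotStrict (u i)) →
      (∀ i x, u i (u i x) ≤ u i x) →
      ∀ i, eqSol m (fun v => f (fun j => u j (v j))) η i ≤ eqSol m f η i := by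
  intro m
  induction m with
  | zero => intro _ _ _ _ _ _ _ _ i; exact i.elim0
  | succ m IH =>
    intro f hf η u hu hcompat hμ hidem
    set F : (Fin (m+1) → L) → Fin (m+1) → L := fun v => f (fun j => u j (v j)) with hFdef
    have hF : Monotone F := fun v w h => hf (fun i => hu i (h i))
    set ul := u (Fin.last m) with hul
    set η' := prevEta m η with hη'
    -- solution components of the original system are post-fixpoints of u
    have hC := compat_le_sol (m+1) f hf η u hu hcompat hμ
    have hClast : ul (lastS m f η) ≤ lastS m f η := by
      have := hC (Fin.last m); rwa [eqSol_succ, Fin.snoc_last] at this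
    have hCprev : ∀ j : Fin m, u j.castSucc (eqSol m (prevF m f (lastS m f η)) η' j) ≤
        eqSol m (prevF m f (lastS m f η)) η' j := by
      intro j
      have := hC j.castSucc; rwa [eqSol_succ, Fin.snoc_castSucc] at this
    -- monotonicity of the truncated solution in the parameter
    have hsp_mono : ∀ x y, x ≤ y → ∀ j,
        eqSol m (prevF m f x) η' j ≤ eqSol m (prevF m f y) η' j := by
      intro x y hxy j
      exact eqSol_le_eqSol m _ _ (prevF_mono hf x) (prevF_mono hf y)
        (fun v i => hf (fun k => snoc_le_snoc (fun _ => le_rfl) hxy k) i.castSucc) _ j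
    -- (i): the truncated up-to solution is below the truncated solution at `ul x`
    have hsolPrev' : ∀ x j, eqSol m (prevF m F x) η' j ≤
        eqSol m (prevF m f (ul x)) η' j := by
      intro x j
      have heq : prevF m F x =
          fun v => prevF m f (ul x) (fun k => u k.castSucc (v k)) := by
        funext v j'
        show f (fun i => u i ((Fin.snoc v x : Fin (m+1) → L) i)) j'.castSucc = _
        rw [pi_map_snoc u v x]
        rfl
      rw [heq]
      exact IH (prevF m f (ul x)) (prevF_mono hf _) η' (fun k => u k.castSucc)
        (fun k => hu k.castSucc) (compat_prev hf hcompat (hidem (Fin.last m) x))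
        (fun k hk => hμ k.castSucc hk) (fun k => hidem k.castSucc) j
    -- rewriting of the up-to system's last function
    have hg' : ∀ x, lastG m F η x =
        f (Fin.snoc (fun j : Fin m => u j.castSucc (eqSol m (prevF m F x) η' j)) (ul x))
          (Fin.last m) := by
      intro x
      show f (fun i => u i ((Fin.snoc (eqSol m (prevF m F x) η') x : Fin (m+1) → L) i))
        (Fin.last m) = _
      rw [pi_map_snoc u _ x]
    have hgmono : Monotone (lastG m f η) := monotone_lastG hf η
    have hg'mono : Monotone (lastG m F η) := monotone_lastG hF η
    -- bound `lastG m F η x` by `lastG m f η x` whenever `ul x ≤ x`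
    have hg'_le_g : ∀ x, ul x ≤ x → lastG m F η x ≤ lastG m f η x := by
      intro x hx
      rw [hg']
      refine hf (fun i => snoc_le_snoc (fun j => ?_) hx i) (Fin.last m)
      refine le_trans (hu j.castSucc (hsolPrev' x j)) ?_
      refine le_trans (hu j.castSucc (hsp_mono _ _ hx j)) ?_
      exact compat_le_sol m (prevF m f x) (prevF_mono hf x) η' (fun k => u k.castSucc)
        (fun k => hu k.castSucc) (compat_prev hf hcompat hx)
        (fun k hk => hμ k.castSucc hk) j
    -- the last components compare
    have hs' : lastS m F η ≤ lastS m f η := by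
      unfold lastS
      rcases hη : η (Fin.last m) with _ | _
      · -- μ case
        refine muFix_le ?_
        refine le_trans (hg'_le_g (muFix (lastG m f η)) ?_) ?_
        · have : lastS m f η = muFix (lastG m f η) := by unfold lastS; rw [hη]
          rwa [this] at hClast
        · exact (muFix_fixed hgmono).le
      · -- ν case
        set t := nuFix (lastG m F η) with htdef
        have htfix : lastG m F η t = t := nuFix_fixed hg'mono
        have hsnu : lastS m f η = nuFix (lastG m f η) := by unfold lastS; rw [hη]
        -- t is a post-fixpoint of ul
        have hut : ul t ≤ t := by
          conv_lhs => rw [← htfix, hg']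
          refine le_trans (hcompat _ (Fin.last m)) ?_
          rw [pi_map_snoc u _ (ul t)]
          refine le_trans (hf (fun i => snoc_le_snoc
            (fun j => hidem j.castSucc _) (hidem (Fin.last m) t) i) (Fin.last m)) ?_
          rw [← hg' t, htfix]
        -- t is a post-fixpoint of the original last function
        have htg : t ≤ lastG m f η t := le_trans (htfix.symm.le) (hg'_le_g t hut)
        exact le_nuFix htg
    -- conclusion, coordinatewise
    intro i
    rw [eqSol_succ, eqSol_succ]
    induction i using Fin.lastCases with
    | last => simpa using hs'
    | cast j =>
      simp only [Fin.snoc_castSucc]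
      refine le_trans (hsolPrev' (lastS m F η) j) ?_
      refine le_trans (hsp_mono _ _ ?_ j) le_rfl
      exact le_trans (hu (Fin.last m) hs') hClast
end Closure

/-- Up-to functions for systems: for a compatible tuple `u` of up-to functions
for the system `E : x =_η f(x)`, the solution `s'` of `Eu : x =_η f(Πu(x))`
satisfies `s' ⊑ s̄ = s` where `s̄` is the solution of `Eū : x =_η f(Πū(x))`
and `s` is the solution of `E`; if each `u_i` is extensive then `s' = s`. -/
theorem up_to_for_systems
    {L : Type*} [CompleteLattice L]
    (m : ℕ) (f : (Fin m → L) → Fin m → L) (hf : Monotone f)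
    (η : Fin m → EqMarker)
    (u : Fin m → L → L) (hu : ∀ i, Monotone (u i))
    (hcompat : ∀ (v : Fin m → L) (i : Fin m), u i (f v i) ≤ f (fun j => u j (v j)) i)
    (hμ : ∀ i, η i = EqMarker.mu → DirContinuous (u i) ∧ BotStrict (u i)) :
    (∀ i, eqSol m (fun v => f (fun j => u j (v j))) η i ≤
            eqSol m (fun v => f (fun j => ubar (u j) (v j))) η i) ∧
    eqSol m (fun v => f (fun j => ubar (u j) (v j))) η = eqSol m f η ∧
    ((∀ (i : Fin m) (x : L), x ≤ u i x) →
      eqSol m (fun v => f (fun j => u j (v j))) η = eqSol m f η) := by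
  have hub_mono : ∀ i, Monotone (ubar (u i)) := fun i => ubar_mono (hu i)
  have hFu : Monotone (fun v : Fin m → L => f (fun j => u j (v j))) :=
    fun v w h => hf (fun i => hu i (h i))
  have hFub : Monotone (fun v : Fin m → L => f (fun j => ubar (u j) (v j))) :=
    fun v w h => hf (fun i => hub_mono i (h i))
  have hub_compat : ∀ (v : Fin m → L) (i : Fin m),
      ubar (u i) (f v i) ≤ f (fun j => ubar (u j) (v j)) i := by
    intro v i
    refine muFix_le (sup_le ?_ ?_)
    · refine le_trans (hcompat (fun j => ubar (u j) (v j)) i) ?_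
      exact hf (fun j => map_ubar_le (hu j) (v j)) i
    · exact hf (fun j => le_ubar (hu j) (v j)) i
  have hub_μ : ∀ i, η i = EqMarker.mu → DirContinuous (ubar (u i)) ∧ BotStrict (ubar (u i)) := by
    intro i hi
    obtain ⟨hc, hs⟩ := hμ i hi
    exact ⟨ubar_cont (hu i) hc, ubar_strict (hu i) hs⟩
  have hub_idem : ∀ (i : Fin m) (x : L), ubar (u i) (ubar (u i) x) ≤ ubar (u i) x :=
    fun i x => ubar_idem_le (hu i) x
  have part1 : ∀ i, eqSol m (fun v => f (fun j => u j (v j))) η i ≤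
      eqSol m (fun v => f (fun j => ubar (u j) (v j))) η i := by
    intro i
    exact eqSol_le_eqSol m _ _ hFu hFub
      (fun v k => hf (fun j => map_le_ubar (hu j) (v j)) k) η i
  have part2 : eqSol m (fun v => f (fun j => ubar (u j) (v j))) η = eqSol m f η := by
    funext i
    refine le_antisymm ?_ ?_
    · exact sol_up_to_le_sol m f hf η (fun j => ubar (u j)) hub_mono hub_compat hub_μ
        hub_idem i
    · exact eqSol_le_eqSol m _ _ hf hFub
        (fun v k => hf (fun j => le_ubar (hu j) (v j)) k) η i
  refine ⟨part1, part2, ?_⟩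
  intro hext
  funext i
  refine le_antisymm ((part1 i).trans (part2 ▸ le_rfl)) ?_
  exact eqSol_le_eqSol m _ _ hf hFu (fun v k => hf (fun j => hext j (v j)) k) η i
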